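/- For all points z and w of the hyperbolic upper half-plane with z.im ≤ w.im, define z' to be the point with real part z.re and imaginary part w.im, set d₁ = dist(z', w), and define z'' to be the point with real part z.re and imaginary part w.im · e^{d₁}, and w'' the point with real part w.re and imaginary part w.im · e^{d₁}. Then dist(z, z'') + dist(z'', w'') + dist(w'', w) ≤ 3 · dist(z, w) + 1. -/

import Mathlib

/-!
The points `z`, `z'`, `z''` lie on one vertical geodesic, so `dist z z'' ≤ dist z z' + d₁`, and
`dist z z' = log (w.im / z.im) ≤ dist z w`. Since `z.im ≤ w.im`, comparing the formulas
`2 arsinh (|z - w| / (2 √(z.im · w.im)))` and `2 arsinh (|z.re - w.re| / (2 w.im))` gives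
`d₁ ≤ dist z w`, while `dist w'' w = d₁`. For the middle segment, write `d₁ = 2 arsinh X` with
`X = |z.re - w.re| / (2 w.im)`: at height `w.im · exp d₁` the same horizontal offset gives
`2 arsinh (X / exp d₁)`, and `exp d₁ = (X + √(1 + X²))² ≥ 2X`, so this is at most `2 arsinh (1/2) ≤ 1`.
Altogether the path has length at most `dist z w + 2 d₁ + 1 ≤ 3 dist z w + 1`.
-/

open UpperHalfPlane Real

theorem Real.div_exp_two_mul_arsinh_le_half (x : ℝ) : x / exp (2 * arsinh x) ≤ 1 / 2 := by
  have hs : 1 ≤ √(1 + x ^ 2) := one_le_sqrt.2 (by nlinarith)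
  have hs_sq : √(1 + x ^ 2) ^ 2 = 1 + x ^ 2 := sq_sqrt (by positivity)
  have hexp : exp (2 * arsinh x) = (x + √(1 + x ^ 2)) ^ 2 := by
    rw [two_mul, exp_add, exp_arsinh]; ring
  rw [hexp, div_le_div_iff₀ (by nlinarith) two_pos]
  nlinarith

namespace UpperHalfPlane

noncomputable def verticalRay (z : ℍ) (t : ℝ) : ℍ :=
  mk ⟨z.re, z.im * exp t⟩ (mul_pos z.im_pos (exp_pos t))

@[simp] theorem verticalRay_re (z : ℍ) (t : ℝ) : (verticalRay z t).re = z.re := rfl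

@[simp] theorem verticalRay_im (z : ℍ) (t : ℝ) : (verticalRay z t).im = z.im * exp t := rfl

theorem dist_verticalRay_self (z : ℍ) {t : ℝ} (ht : 0 ≤ t) : dist (verticalRay z t) z = t := by
  rw [dist_of_re_eq (verticalRay_re z t), verticalRay_im, log_mul z.im_ne_zero (exp_ne_zero t),
    log_exp, Real.dist_eq, add_sub_cancel_left, abs_of_nonneg ht]

theorem dist_of_im_eq {z w : ℍ} (h : z.im = w.im) :
    dist z w = 2 * arsinh (dist z.re w.re / (2 * w.im)) := by
  rw [dist_eq, Complex.dist_of_im_eq h, h, sqrt_mul_self w.im_pos.le]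
  rfl

theorem dist_mk_re_im_le {z w : ℍ} (h : z.im ≤ w.im) :
    dist (mk ⟨z.re, w.im⟩ w.im_pos) w ≤ dist z w := by
  have hre : dist z.re w.re ≤ dist (z : ℂ) w := by
    simpa only [Real.dist_eq, Complex.dist_eq, Complex.sub_re, coe_re] using
      Complex.abs_re_le_norm ((z : ℂ) - w)
  have hsqrt : √(z.im * w.im) ≤ w.im :=
    (sqrt_le_sqrt (mul_le_mul_of_nonneg_right h w.im_pos.le)).trans_eq (sqrt_mul_self w.im_pos.le)
  have him : (mk ⟨z.re, w.im⟩ w.im_pos).im = w.im := rfl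
  rw [dist_of_im_eq him, dist_eq z w]
  gcongr 2 * arsinh ?_
  exact div_le_div₀ dist_nonneg hre (by positivity) (by gcongr)

theorem dist_verticalRay_dist_le_one {z w : ℍ} (h : z.im = w.im) :
    dist (verticalRay z (dist z w)) (verticalRay w (dist z w)) ≤ 1 := by
  set X := dist z.re w.re / (2 * w.im)
  have hd : dist z w = 2 * arsinh X := dist_of_im_eq h
  rw [dist_of_im_eq (by simp [h]), verticalRay_re, verticalRay_re, verticalRay_im, ← mul_assoc,
    ← div_div, hd]
  calc 2 * arsinh (X / exp (2 * arsinh X)) ≤ 2 * arsinh (sinh (1 / 2)) := by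
        gcongr
        exact (div_exp_two_mul_arsinh_le_half X).trans (self_le_sinh_iff.2 (by norm_num))
    _ = 1 := by rw [arsinh_sinh]; norm_num

end UpperHalfPlane

/-- Corollary 2.9 in `ℍ²` with `η = ∞` and `δ = 1`: the quasi-geodesic path
`z → z'' → w'' → w` has total length at most `3 · dist z w + 1`. Here `z'` is the point on
the vertical ray from `z` lying on the same horosphere (centered at `∞`) as `w`,
`d₁ = dist z' w`, and `z''`, `w''` are obtained from `z'`, `w` by moving hyperbolic
arclength `d₁` up the vertical geodesics. -/
theorem quasi_geodesic_path_length_le (z w : ℍ) (h : z.im ≤ w.im) :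
    let z' : ℍ := UpperHalfPlane.mk ⟨z.re, w.im⟩ w.im_pos
    let d₁ : ℝ := dist z' w
    let z'' : ℍ := UpperHalfPlane.mk ⟨z.re, w.im * Real.exp d₁⟩
      (mul_pos w.im_pos (Real.exp_pos _))
    let w'' : ℍ := UpperHalfPlane.mk ⟨w.re, w.im * Real.exp d₁⟩
      (mul_pos w.im_pos (Real.exp_pos _))
    dist z z'' + dist z'' w'' + dist w'' w ≤ 3 * dist z w + 1 := by
  intro z' d₁ z'' w''
  have hz'' : z'' = verticalRay z' d₁ := rfl
  have hd₁ : d₁ ≤ dist z w := dist_mk_re_im_le h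
  have hzz' : dist z z' ≤ dist z w := by
    rw [dist_of_re_eq (z := z) (w := z') rfl]
    exact dist_log_im_le z w
  have hzz'' : dist z z'' ≤ dist z w + d₁ :=
    calc dist z z'' ≤ dist z z' + dist z'' z' := dist_triangle_right z z'' z'
      _ = dist z z' + d₁ := by rw [hz'', dist_verticalRay_self z' dist_nonneg]
      _ ≤ dist z w + d₁ := by gcongr
  have hz''w'' : dist z'' w'' ≤ 1 := dist_verticalRay_dist_le_one (z := z') (w := w) rfl
  have hw''w : dist w'' w = d₁ := dist_verticalRay_self w dist_nonneg
  linarith
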